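/- arXiv:math/0604563 — 2 statements merged into one kernel-verified Lean document; each statement's English description precedes it below -/
import Mathlib

section
/- Let J ⊆ ℂ[x₁,…,x_d] be a homogeneous radical ideal and let 𝔪 = (x₁,…,x_d) be the irrelevant maximal ideal. Then for every k ≥ 1 the ideal J + 𝔪^k is integrally closed. -/
open MvPolynomial

attribute [local instance] MvPolynomial.gradedAlgebra


lemma coeff_aeval_scale {d : ℕ} (p : Fin d → ℂ) (g : MvPolynomial (Fin d) ℂ) (j : ℕ) :
    (aeval (fun i => Polynomial.C (p i) * Polynomial.X) g).coeff j
      = eval p (homogeneousComponent j g) := by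
  induction g using MvPolynomial.induction_on' with
  | add f g hf hg => simp [map_add, hf, hg, Polynomial.coeff_add]
  | monomial s c =>
    rw [aeval_monomial,
      homogeneousComponent_of_mem ((mem_homogeneousSubmodule _ _).2 (isHomogeneous_monomial c rfl))]
    have h1 : (s.prod fun i e => (Polynomial.C (p i) * Polynomial.X) ^ e)
        = Polynomial.C (∏ i ∈ s.support, p i ^ s i) * Polynomial.X ^ s.degree := by
      simp only [Finsupp.prod, Finsupp.degree, mul_pow, ← Polynomial.C_pow]
      rw [Finset.prod_mul_distrib, ← map_prod, Finset.prod_pow_eq_pow_sum]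
      rfl
    rw [h1, Polynomial.algebraMap_eq, ← mul_assoc, ← Polynomial.C_mul,
      Polynomial.coeff_C_mul, Polynomial.coeff_X_pow]
    by_cases h : j = s.degree
    · simp [h, eval_monomial, Finsupp.prod]
    · simp [h]

lemma aux_dvd (n : ℕ) (hn : 0 < n) : ∀ (k : ℕ) (φ : Polynomial ℂ) (c : ℕ → Polynomial ℂ),
    (∀ i, 1 ≤ i → i ≤ n → Polynomial.X ^ (k * i) ∣ c i) →
    φ ^ n + ∑ i ∈ Finset.range n, c (i + 1) * φ ^ (n - (i + 1)) = 0 →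
    Polynomial.X ^ k ∣ φ := by
  intro k
  induction k with
  | zero => intro φ c _ _; simp
  | succ k ih =>
    intro φ c hc heq
    have hXphi : Polynomial.X ∣ φ := by
      have h1 : φ ^ n = -∑ i ∈ Finset.range n, c (i + 1) * φ ^ (n - (i + 1)) :=
        eq_neg_of_add_eq_zero_left heq
      have h2 : Polynomial.X ∣ φ ^ n := by
        rw [h1]
        apply dvd_neg.mpr
        apply Finset.dvd_sum
        intro i _
        exact dvd_mul_of_dvd_left
          (dvd_trans (dvd_pow_self _ (by positivity)) (hc (i + 1) (by omega) (by
            have := Finset.mem_range.mp ‹i ∈ Finset.range n›; omega))) _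
      exact Polynomial.prime_X.dvd_of_dvd_pow h2
    obtain ⟨ψ, hψ⟩ := hXphi
    set dfun : ℕ → Polynomial ℂ := fun i => c i / Polynomial.X ^ i with hdfun
    have hcd : ∀ i, 1 ≤ i → i ≤ n →
        c i = Polynomial.X ^ i * dfun i ∧ Polynomial.X ^ (k * i) ∣ dfun i := by
      intro i h1 h2
      obtain ⟨e, he⟩ := hc i h1 h2
      have hXi : (Polynomial.X : Polynomial ℂ) ^ i ∣ c i := by
        rw [he]; exact dvd_mul_of_dvd_left (pow_dvd_pow _ (by nlinarith)) e
      have h3 : Polynomial.X ^ i * dfun i = c i :=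
        EuclideanDomain.mul_div_cancel' (pow_ne_zero _ Polynomial.X_ne_zero) hXi
      refine ⟨h3.symm, ?_⟩
      have h4 : Polynomial.X ^ i * dfun i
          = Polynomial.X ^ i * (Polynomial.X ^ (k * i) * e) := by
        rw [h3, he, ← mul_assoc, ← pow_add]
        congr 2
        ring
      have h5 := mul_left_cancel₀ (pow_ne_zero i Polynomial.X_ne_zero) h4
      exact h5 ▸ dvd_mul_right _ _
    have hsum : Polynomial.X ^ n *
        (ψ ^ n + ∑ i ∈ Finset.range n, dfun (i + 1) * ψ ^ (n - (i + 1))) = 0 := by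
      rw [mul_add, Finset.mul_sum, ← heq]
      congr 1
      · rw [hψ, mul_pow]
      · apply Finset.sum_congr rfl
        intro i hi
        rw [Finset.mem_range] at hi
        have hx : (Polynomial.X : Polynomial ℂ) ^ n
            = Polynomial.X ^ (i + 1) * Polynomial.X ^ (n - (i + 1)) := by
          rw [← pow_add]; congr 1; omega
        rw [(hcd (i + 1) (by omega) (by omega)).1, hψ, mul_pow, hx]
        ring
    have hinner : ψ ^ n + ∑ i ∈ Finset.range n, dfun (i + 1) * ψ ^ (n - (i + 1)) = 0 :=
      (mul_eq_zero.mp hsum).resolve_left (pow_ne_zero _ Polynomial.X_ne_zero)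
    have := ih ψ dfun (fun i h1 h2 => (hcd i h1 h2).2) hinner
    rw [hψ, pow_succ']
    exact mul_dvd_mul_left _ this


lemma prod_mem_pow' {R : Type*} [CommRing R] (I : Ideal R) {α : Type*} (t : Finset α)
    (f : α → R) (e : α → ℕ) (h : ∀ a ∈ t, f a ∈ I ^ e a) :
    ∏ a ∈ t, f a ∈ I ^ (∑ a ∈ t, e a) := by
  classical
  induction t using Finset.cons_induction with
  | empty => simp [Ideal.one_eq_top]
  | cons a t ha ih =>
    rw [Finset.prod_cons, Finset.sum_cons, pow_add]
    exact Ideal.mul_mem_mul (h a (Finset.mem_cons_self a t))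
      (ih fun b hb => h b (Finset.mem_cons_of_mem hb))

lemma mem_pow_span_X {d : ℕ} {q : MvPolynomial (Fin d) ℂ} {j k : ℕ} (hq : q.IsHomogeneous j)
    (hjk : k ≤ j) :
    q ∈ (Ideal.span (Set.range (X : Fin d → MvPolynomial (Fin d) ℂ))) ^ k := by
  set M := Ideal.span (Set.range (X : Fin d → MvPolynomial (Fin d) ℂ)) with hM
  rw [q.as_sum]
  apply Ideal.sum_mem
  intro s hs
  have hdeg : s.degree = j := by
    have := hq (mem_support_iff.mp hs)
    rw [Finsupp.degree_eq_weight_one]; exact this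
  rw [monomial_eq]
  apply Ideal.mul_mem_left
  have h1 : (s.prod fun i e => (X i : MvPolynomial (Fin d) ℂ) ^ e) ∈ M ^ s.degree := by
    rw [Finsupp.prod, Finsupp.degree]
    apply prod_mem_pow'
    intro i _
    exact Ideal.pow_mem_pow (Ideal.subset_span (Set.mem_range_self i)) _
  exact Ideal.pow_le_pow_right (hdeg ▸ hjk) h1


lemma decompose_eq_homogeneousComponent {d : ℕ} (g : MvPolynomial (Fin d) ℂ) (i : ℕ) :
    (DirectSum.decompose (homogeneousSubmodule (Fin d) ℂ) g i : MvPolynomial (Fin d) ℂ)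
      = homogeneousComponent i g :=
  MvPolynomial.decomposition.decompose'_apply g i


/-- `f` is integral over the ideal `I`: it satisfies a monic equation
`f ^ n + a 1 * f ^ (n-1) + ⋯ + a n = 0` with `a i ∈ I ^ i`. -/
def IsIntegralOverIdeal {R : Type*} [CommRing R] (I : Ideal R) (f : R) : Prop :=
  ∃ n : ℕ, 0 < n ∧ ∃ a : ℕ → R, (∀ i, 1 ≤ i → i ≤ n → a i ∈ I ^ i) ∧
    f ^ n + ∑ i ∈ Finset.range n, a (i + 1) * f ^ (n - (i + 1)) = 0

/-- An ideal is integrally closed if it contains every element integral over it. -/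
def Ideal.IsIntegrallyClosedIdeal {R : Type*} [CommRing R] (I : Ideal R) : Prop :=
  ∀ f, IsIntegralOverIdeal I f → f ∈ I

/-- Let `J ⊆ ℂ[x₁,…,x_d]` be a homogeneous radical ideal and `𝔪 = (x₁,…,x_d)`.
Then for every `k ≥ 1` the ideal `J + 𝔪 ^ k` is integrally closed. -/
theorem stmt0 (d : ℕ) (J : Ideal (MvPolynomial (Fin d) ℂ))
    (hJhom : Ideal.IsHomogeneous (homogeneousSubmodule (Fin d) ℂ) J)
    (hJrad : J.IsRadical) (k : ℕ) (hk : 1 ≤ k) :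
    (J + (Ideal.span (Set.range (X : Fin d → MvPolynomial (Fin d) ℂ))) ^ k).IsIntegrallyClosedIdeal := by
  intro f hf
  obtain ⟨n, hn, a, ha, heq⟩ := hf
  set M := Ideal.span (Set.range (X : Fin d → MvPolynomial (Fin d) ℂ)) with hM
  -- Key pointwise vanishing of low-degree components
  have key : ∀ p : Fin d → ℂ, (∀ g ∈ J, eval p g = 0) → ∀ j, j < k →
      eval p (homogeneousComponent j f) = 0 := by
    intro p hp j hj
    set ψ := (aeval (fun i => Polynomial.C (p i) * Polynomial.X) :
      MvPolynomial (Fin d) ℂ →ₐ[ℂ] Polynomial ℂ) with hψdef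
    have hψcoeff : ∀ g m, (ψ g).coeff m = eval p (homogeneousComponent m g) := by
      intro g m; exact coeff_aeval_scale p g m
    have hψJ : ∀ g ∈ J, ψ g = 0 := by
      intro g hg
      ext m
      rw [hψcoeff, Polynomial.coeff_zero]
      apply hp
      have := hJhom m hg
      rwa [decompose_eq_homogeneousComponent] at this
    have hmapI : Ideal.map ψ (J + M ^ k) ≤ Ideal.span {(Polynomial.X : Polynomial ℂ) ^ k} := by
      rw [Ideal.add_eq_sup, Ideal.map_sup]
      apply sup_le
      · rw [Ideal.map_le_iff_le_comap]
        intro g hg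
        rw [Ideal.mem_comap, hψJ g hg]
        exact Ideal.zero_mem _
      · rw [Ideal.map_pow]
        have h1 : Ideal.map ψ M ≤ Ideal.span {(Polynomial.X : Polynomial ℂ)} := by
          rw [hM, Ideal.map_span]
          apply Ideal.span_le.2
          rintro _ ⟨_, ⟨i, rfl⟩, rfl⟩
          show ψ (X i) ∈ Ideal.span {(Polynomial.X : Polynomial ℂ)}
          rw [hψdef, aeval_X, Ideal.mem_span_singleton]
          exact Dvd.intro_left _ rfl
        calc Ideal.map ψ M ^ k ≤ Ideal.span {(Polynomial.X : Polynomial ℂ)} ^ k :=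
              Ideal.pow_right_mono h1 k
          _ = Ideal.span {(Polynomial.X : Polynomial ℂ) ^ k} := Ideal.span_singleton_pow _ _
    have hai : ∀ i, 1 ≤ i → i ≤ n → Polynomial.X ^ (k * i) ∣ ψ (a i) := by
      intro i h1 h2
      have hmem : ψ (a i) ∈ Ideal.map ψ ((J + M ^ k) ^ i) :=
        Ideal.mem_map_of_mem _ (ha i h1 h2)
      rw [Ideal.map_pow] at hmem
      have h3 : (Ideal.map ψ (J + M ^ k)) ^ i
          ≤ Ideal.span {(Polynomial.X : Polynomial ℂ) ^ k} ^ i := Ideal.pow_right_mono hmapI i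
      rw [Ideal.span_singleton_pow, ← pow_mul] at h3
      exact Ideal.mem_span_singleton.mp (h3 hmem)
    have heqψ : (ψ f) ^ n + ∑ i ∈ Finset.range n, ψ (a (i + 1)) * (ψ f) ^ (n - (i + 1)) = 0 := by
      have := congrArg ψ heq
      simpa only [map_add, map_pow, map_sum, map_mul, map_zero] using this
    have hdvd : Polynomial.X ^ k ∣ ψ f :=
      aux_dvd n hn k (ψ f) (fun i => ψ (a i)) hai heqψ
    have := (Polynomial.X_pow_dvd_iff.mp hdvd) j hj
    rwa [hψcoeff] at this
  set flow := ∑ j ∈ Finset.range k, homogeneousComponent j f with hflow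
  have hflowJ : flow ∈ J := by
    have hrad : flow ∈ J.radical := by
      rw [← MvPolynomial.vanishingIdeal_zeroLocus_eq_radical (K := ℂ)]
      rw [MvPolynomial.mem_vanishingIdeal_iff]
      intro x hx
      rw [hflow, map_sum]
      apply Finset.sum_eq_zero
      intro j hj
      exact key x (MvPolynomial.mem_zeroLocus_iff.mp hx) j (Finset.mem_range.mp hj)
    rwa [hJrad.radical] at hrad
  have hrest : f - flow ∈ M ^ k := by
    rcases lt_or_ge f.totalDegree k with hcase | hcase
    · have hfl : flow = f := by
        have hsub : Finset.range (f.totalDegree + 1) ⊆ Finset.range k :=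
          Finset.range_subset_range.2 (by omega)
        have hz : ∀ j ∈ Finset.range k, j ∉ Finset.range (f.totalDegree + 1) →
            homogeneousComponent j f = 0 := by
          intro j _ hj
          apply homogeneousComponent_eq_zero
          simp only [Finset.mem_range, not_lt] at hj
          omega
        rw [hflow, ← Finset.sum_subset hsub hz, sum_homogeneousComponent]
      rw [hfl, sub_self]
      exact Ideal.zero_mem _
    · have hsplit : f - flow = ∑ j ∈ Finset.Ico k (f.totalDegree + 1), homogeneousComponent j f := by
        have h1 := sum_homogeneousComponent f
        rw [← Finset.sum_range_add_sum_Ico _ (by omega : k ≤ f.totalDegree + 1)] at h1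
        rw [hflow, eq_sub_of_add_eq' h1]
      rw [hsplit]
      apply Ideal.sum_mem
      intro j hj
      exact mem_pow_span_X (homogeneousComponent_isHomogeneous j f) (Finset.mem_Ico.mp hj).1
  have hdecomp : f = flow + (f - flow) := by ring
  rw [hdecomp, Ideal.add_eq_sup]
  exact Ideal.add_mem _ (Ideal.mem_sup_left hflowJ) (Ideal.mem_sup_right hrest)
end

section
/- Let R = k[x₁,…,x_d] (or its localization at the origin) and let K• be the Koszul complex on x₁,…,x_d. Then for every a ≥ 1 and i ≥ 1 the three-term complex 𝔪^{a-1}·K_{i+1} → 𝔪^a·K_i → 𝔪^{a+1}·K_{i-1} obtained by restricting the Koszul differentials is exact at the middle term, where 𝔪 = (x₁,…,x_d). -/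
/-!
Put `xⱼ` for multiplication by `X j`, `∂ⱼ` for `pderiv j`, and let `εⱼ`, `ιⱼ` be exterior
multiplication by and contraction with `eⱼ` on chains. The Koszul differential `δ = ∑ xⱼ ιⱼ` and
the de Rham differential `D = ∑ ∂ⱼ εⱼ` satisfy `δD + Dδ = E + N`, where `E = ∑ xⱼ ∂ⱼ` is the Euler
operator and `N` multiplies an `i`-chain by `i`. This follows from the Clifford relations
`ιⱼ εₗ + εₗ ιⱼ = [j = l]` and the Leibniz rule `∂ₗ xⱼ = xⱼ ∂ₗ + [j = l]`. So a cycle `v` of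
degree `i ≥ 1` satisfies `δ (D v) = (E + i) v`. In characteristic zero `E + c` (`c ≥ 1`)
is invertible: scale each monomial of degree `n` by `(n + c)⁻¹`. Since
`(E + i)⁻¹ δ = δ (E + i + 1)⁻¹`, `w = (E + i + 1)⁻¹ (D v)` satisfies `δ w = v`. Moreover
`∂ⱼ` maps `𝔪^a` into `𝔪^(a-1)` and the scaling preserves every `𝔪^n`.
-/

open MvPolynomial

/-- The Koszul differential `K_{i+1} → K_i` of the Koszul complex on `z₁,…,z_r`,
where `K_i` is free on the `i`-element subsets of `{1,…,r}`. -/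
def koszulDiff {O : Type*} [CommRing O] {r : ℕ} (z : Fin r → O) (i : ℕ)
    (v : {s : Finset (Fin r) // s.card = i + 1} → O) :
    {s : Finset (Fin r) // s.card = i} → O :=
  fun t => ∑ j : Fin r, if h : j ∈ t.val then 0
    else (-1 : O) ^ ((t.val.filter (fun m => m < j)).card) * z j *
      v ⟨insert j t.val, by rw [Finset.card_insert_of_notMem h, t.2]⟩

open Finset

namespace MvPolynomial

section CommSemiring

variable {σ R : Type*} [CommSemiring R]

lemma coeff_sum_support_monomial_mul (f : (σ →₀ ℕ) → R) (p : MvPolynomial σ R) (τ : σ →₀ ℕ) :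
    coeff τ (∑ x ∈ p.support, monomial x (f x * coeff x p)) = f τ * coeff τ p := by
  classical
  simp only [coeff_sum, coeff_monomial, sum_ite_eq', mem_support_iff]
  split_ifs with h
  · rfl
  · rw [not_not.1 h, mul_zero]

noncomputable def scaleCoeffs (f : (σ →₀ ℕ) → R) : MvPolynomial σ R →ₗ[R] MvPolynomial σ R where
  toFun p := ∑ x ∈ p.support, monomial x (f x * coeff x p)
  map_add' p q := by
    ext τ
    rw [coeff_add, coeff_sum_support_monomial_mul, coeff_sum_support_monomial_mul,
      coeff_sum_support_monomial_mul, coeff_add, mul_add]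
  map_smul' r p := by
    ext τ
    rw [coeff_sum_support_monomial_mul, RingHom.id_apply, coeff_smul, coeff_smul,
      coeff_sum_support_monomial_mul, smul_eq_mul, smul_eq_mul, mul_left_comm]

@[simp]
lemma coeff_scaleCoeffs (f : (σ →₀ ℕ) → R) (p : MvPolynomial σ R) (τ : σ →₀ ℕ) :
    coeff τ (scaleCoeffs f p) = f τ * coeff τ p :=
  coeff_sum_support_monomial_mul f p τ

lemma scaleCoeffs_mem_pow_idealOfVars (f : (σ →₀ ℕ) → R) {a : ℕ} {p : MvPolynomial σ R}
    (hp : p ∈ idealOfVars σ R ^ a) : scaleCoeffs f p ∈ idealOfVars σ R ^ a := by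
  rw [mem_pow_idealOfVars_iff'] at hp ⊢
  intro τ hτ
  rw [coeff_scaleCoeffs, hp τ hτ, mul_zero]

lemma pderiv_mem_pow_idealOfVars {a : ℕ} {p : MvPolynomial σ R} (hp : p ∈ idealOfVars σ R ^ a)
    (i : σ) : pderiv i p ∈ idealOfVars σ R ^ (a - 1) := by
  rw [mem_pow_idealOfVars_iff'] at hp ⊢
  intro τ hτ
  rw [coeff_pderiv, hp _ (by rw [map_add, Finsupp.degree_single]; omega), zero_mul]

lemma pderiv_mul_mulLeft_X [DecidableEq σ] (j l : σ) :
    (pderiv l).toLinearMap * LinearMap.mulLeft R (X j) =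
      LinearMap.mulLeft R (X j) * (pderiv l).toLinearMap + if j = l then 1 else 0 := by
  refine LinearMap.ext fun p => ?_
  rw [Module.End.mul_apply, LinearMap.add_apply, Module.End.mul_apply]
  simp only [Derivation.coeFn_coe, LinearMap.mulLeft_apply, Derivation.leibniz, pderiv_X]
  split_ifs with h
  · subst h; simp [add_comm]
  · simp [Ne.symm h]

lemma coeff_X_mul_pderiv (i : σ) (p : MvPolynomial σ R) (τ : σ →₀ ℕ) :
    coeff τ (X i * pderiv i p) = τ i * coeff τ p := by
  classical
  rw [coeff_X_mul']
  split_ifs with h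
  · rw [Finsupp.mem_support_iff] at h
    rw [coeff_pderiv, Finsupp.sub_add_single_one_cancel h, Finsupp.tsub_apply,
      Finsupp.single_eq_same, ← Nat.cast_add_one, Nat.sub_add_cancel (Nat.one_le_iff_ne_zero.2 h),
      mul_comm]
  · rw [Finsupp.notMem_support_iff.1 h, Nat.cast_zero, zero_mul]

lemma coeff_sum_X_mul_pderiv [Fintype σ] (p : MvPolynomial σ R) (τ : σ →₀ ℕ) :
    coeff τ (∑ i, X i * pderiv i p) = τ.degree * coeff τ p := by
  simp only [coeff_sum, coeff_X_mul_pderiv, ← sum_mul, Finsupp.degree_eq_sum, Nat.cast_sum]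

end CommSemiring

section Field

variable {σ K : Type*} [Field K]

noncomputable def eulerInv (c : ℕ) : MvPolynomial σ K →ₗ[K] MvPolynomial σ K :=
  scaleCoeffs fun τ => ((τ.degree + c : ℕ) : K)⁻¹

lemma eulerInv_X_mul (c : ℕ) (j : σ) (p : MvPolynomial σ K) :
    eulerInv c (X j * p) = X j * eulerInv (c + 1) p := by
  classical
  ext τ
  simp only [eulerInv, coeff_scaleCoeffs, coeff_X_mul']
  split_ifs with h
  · rw [Finsupp.mem_support_iff] at h
    have hdeg : τ.degree = (τ - Finsupp.single j 1).degree + 1 := by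
      conv_lhs => rw [← Finsupp.sub_add_single_one_cancel h]
      rw [map_add, Finsupp.degree_single]
    rw [hdeg, add_assoc, add_comm 1 c]
  · rw [mul_zero]

lemma eulerInv_sum_X_mul_pderiv_add [CharZero K] [Fintype σ] {c : ℕ} (hc : c ≠ 0)
    (p : MvPolynomial σ K) : eulerInv c (∑ i, X i * pderiv i p + c • p) = p := by
  ext τ
  have : ((τ.degree + c : ℕ) : K) ≠ 0 := by exact_mod_cast (by omega : τ.degree + c ≠ 0)
  rw [eulerInv, coeff_scaleCoeffs, coeff_add, coeff_sum_X_mul_pderiv, coeff_smul, nsmul_eq_mul,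
    ← add_mul, ← Nat.cast_add, inv_mul_cancel_left₀ this]

end Field

end MvPolynomial

namespace Koszul

section Chains

variable {ι R M : Type*} [CommRing R] [AddCommGroup M] [Module R M]

def pointwise : Module.End R M →+* Module.End R (Finset ι → M) where
  toFun f := f.compLeft (Finset ι)
  map_one' := rfl
  map_mul' _ _ := rfl
  map_zero' := rfl
  map_add' _ _ := rfl

@[simp]
lemma pointwise_apply (f : Module.End R M) (g : Finset ι → M) (s : Finset ι) :
    pointwise f g s = f (g s) := rfl

variable [LinearOrder ι]

def koszulSign (j : ι) (t : Finset ι) : ℤˣ := (-1) ^ #{m ∈ t | m < j}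

lemma koszulSign_insert {j : ι} {t : Finset ι} (hj : j ∉ t) (l : ι) :
    koszulSign l (insert j t) = (if j < l then -1 else 1) * koszulSign l t := by
  unfold koszulSign
  rw [filter_insert]
  split_ifs with h
  · rw [card_insert_of_notMem (fun hm => hj (mem_filter.1 hm).1), pow_succ, mul_comm]
  · rw [one_mul]

lemma koszulSign_erase {j : ι} {t : Finset ι} (hj : j ∈ t) (l : ι) :
    koszulSign l (t.erase j) = (if j < l then -1 else 1) * koszulSign l t := by
  conv_rhs => rw [← insert_erase hj, koszulSign_insert (notMem_erase j t), ← mul_assoc]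
  split_ifs <;> simp

/- A chain is a function on all finsets, the free module on the `i`-subsets being its values on
`i`-subsets; `wedge j` and `contract j` are exterior multiplication by and contraction with `eⱼ`. -/
variable (R M) in
def wedge (j : ι) : Module.End R (Finset ι → M) where
  toFun g s := if j ∈ s then koszulSign j s • g (s.erase j) else 0
  map_add' g h := by funext s; simp only [Pi.add_apply]; split_ifs <;> simp [smul_add]
  map_smul' r g := by funext s; simp only [Pi.smul_apply]; split_ifs <;> simp [smul_comm r]

variable (R M) in
def contract (j : ι) : Module.End R (Finset ι → M) where
  toFun g s := if j ∈ s then 0 else koszulSign j s • g (insert j s)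
  map_add' g h := by funext s; simp only [Pi.add_apply]; split_ifs <;> simp [smul_add]
  map_smul' r g := by funext s; simp only [Pi.smul_apply]; split_ifs <;> simp [smul_comm r]

lemma wedge_apply (j : ι) (g : Finset ι → M) (s : Finset ι) :
    wedge R M j g s = if j ∈ s then koszulSign j s • g (s.erase j) else 0 := rfl

lemma contract_apply (j : ι) (g : Finset ι → M) (s : Finset ι) :
    contract R M j g s = if j ∈ s then 0 else koszulSign j s • g (insert j s) := rfl

lemma wedge_mul_pointwise (j : ι) (f : Module.End R M) :
    wedge R M j * pointwise f = pointwise f * wedge R M j := by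
  ext g s
  simp only [Module.End.mul_apply, wedge_apply, pointwise_apply]
  split_ifs <;> simp [Units.smul_def, map_zsmul]

lemma contract_mul_pointwise (j : ι) (f : Module.End R M) :
    contract R M j * pointwise f = pointwise f * contract R M j := by
  ext g s
  simp only [Module.End.mul_apply, contract_apply, pointwise_apply]
  split_ifs <;> simp [Units.smul_def, map_zsmul]

lemma contract_mul_wedge_add_wedge_mul_contract (j l : ι) :
    contract R M j * wedge R M l + wedge R M l * contract R M j = if j = l then 1 else 0 := by
  refine LinearMap.ext fun g => funext fun s => ?_
  rcases eq_or_ne j l with rfl | hjl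
  · simp only [if_pos, LinearMap.add_apply, Pi.add_apply, Module.End.mul_apply, contract_apply,
      wedge_apply, Module.End.one_apply]
    by_cases hj : j ∈ s
    · simp [hj, koszulSign_erase hj, smul_smul]
    · simp [hj, koszulSign_insert hj, smul_smul]
  · simp only [if_neg hjl, LinearMap.add_apply, Pi.add_apply, Module.End.mul_apply,
      contract_apply, wedge_apply, LinearMap.zero_apply, Pi.zero_apply]
    by_cases hj : j ∈ s <;> by_cases hl : l ∈ s
    · simp [hj, hl, hjl]
    · simp [hj, hl]
    · rw [if_neg hj, if_pos (mem_insert_of_mem hl), if_pos hl, if_neg (by simp [hj]),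
        erase_insert_of_ne hjl, koszulSign_insert hj, koszulSign_erase hl, smul_smul, smul_smul]
      rcases lt_or_gt_of_ne hjl with h | h
      · simp [h, not_lt_of_gt h, mul_comm]
      · simp [h, not_lt_of_gt h, mul_comm]
    · simp [hj, hl, hjl.symm]

lemma sum_wedge_mul_contract_apply [Fintype ι] (g : Finset ι → M) (s : Finset ι) :
    (∑ j, wedge R M j * contract R M j) g s = #s • g s := by
  have hterm : ∀ j, (wedge R M j * contract R M j) g s = if j ∈ s then g s else 0 := by
    intro j
    rw [Module.End.mul_apply, wedge_apply, contract_apply]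
    by_cases hj : j ∈ s
    · rw [if_pos hj, if_pos hj, if_neg (notMem_erase j s), insert_erase hj, koszulSign_erase hj,
        if_neg (lt_irrefl j), one_mul, smul_smul, Int.units_mul_self, one_smul]
    · rw [if_neg hj, if_neg hj]
  simp only [LinearMap.sum_apply, Finset.sum_apply, hterm, sum_ite_mem, univ_inter, sum_const]

end Chains

section Polynomial

variable {ι R : Type*} [CommRing R] [LinearOrder ι]

lemma koszulBoundary_term_add_exteriorDeriv_term (j l : ι) :
    pointwise (LinearMap.mulLeft R (X j)) * contract R _ j *
        (pointwise (pderiv l).toLinearMap * wedge R _ l) +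
      pointwise (pderiv l).toLinearMap * wedge R _ l *
        (pointwise (LinearMap.mulLeft R (X j)) * contract R _ j) =
    if j = l then
      pointwise (LinearMap.mulLeft R (X j) * (pderiv j).toLinearMap) + wedge R _ j * contract R _ j
    else 0 := by
  set x : Module.End R (Finset ι → MvPolynomial ι R) := pointwise (LinearMap.mulLeft R (X j))
  set d : Module.End R (Finset ι → MvPolynomial ι R) := pointwise (pderiv l).toLinearMap
  calc _ = x * d * (contract R _ j * wedge R _ l + wedge R _ l * contract R _ j) +
        (d * x - x * d) * (wedge R _ l * contract R _ j) := by
        rw [mul_assoc x, ← mul_assoc (contract R _ j), contract_mul_pointwise,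
          mul_assoc d (wedge R _ l), ← mul_assoc (wedge R _ l) x, wedge_mul_pointwise, mul_add,
          sub_mul]
        simp only [mul_assoc]
        abel
    _ = _ := by
        rw [contract_mul_wedge_add_wedge_mul_contract, ← map_mul, ← map_mul,
          pderiv_mul_mulLeft_X, map_add, add_sub_cancel_left]
        split_ifs with h
        · subst h; simp
        · simp

variable [Fintype ι]

variable (ι R) in
noncomputable def koszulBoundary : Module.End R (Finset ι → MvPolynomial ι R) :=
  ∑ j, pointwise (LinearMap.mulLeft R (X j)) * contract R _ j

variable (ι R) in
noncomputable def exteriorDeriv : Module.End R (Finset ι → MvPolynomial ι R) :=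
  ∑ j, pointwise (pderiv j).toLinearMap * wedge R _ j

theorem koszulBoundary_mul_exteriorDeriv_add_exteriorDeriv_mul_koszulBoundary :
    koszulBoundary ι R * exteriorDeriv ι R + exteriorDeriv ι R * koszulBoundary ι R =
      pointwise (∑ j, LinearMap.mulLeft R (X j) * (pderiv j).toLinearMap) +
        ∑ j, wedge R _ j * contract R _ j := by
  rw [koszulBoundary, exteriorDeriv, sum_mul_sum, sum_mul_sum, sum_comm (s := univ) (t := univ)
    (f := fun l j => _ * (_ * contract R _ j)), ← sum_add_distrib]
  simp only [← sum_add_distrib, koszulBoundary_term_add_exteriorDeriv_term, sum_ite_eq, mem_univ,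
    if_true, map_sum]

lemma koszulBoundary_apply (g : Finset ι → MvPolynomial ι R) (s : Finset ι) :
    koszulBoundary ι R g s = ∑ j, if j ∈ s then 0 else koszulSign j s • (X j * g (insert j s)) := by
  simp only [koszulBoundary, LinearMap.sum_apply, Finset.sum_apply, Module.End.mul_apply,
    pointwise_apply, contract_apply, LinearMap.mulLeft_apply]
  refine sum_congr rfl fun j _ => ?_
  split_ifs
  · exact mul_zero _
  · exact mul_smul_comm _ _ _

lemma koszulBoundary_apply_eq_zero_of_card_ne {k : ℕ} {g : Finset ι → MvPolynomial ι R}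
    (hg : ∀ s, #s ≠ k + 1 → g s = 0) {t : Finset ι} (ht : #t ≠ k) :
    koszulBoundary ι R g t = 0 := by
  rw [koszulBoundary_apply]
  refine sum_eq_zero fun j _ => ?_
  split_ifs with hj
  · rfl
  · rw [hg _ (by rwa [card_insert_of_notMem hj, Ne, Nat.add_right_cancel_iff]), mul_zero,
      smul_zero]

lemma koszulBoundary_exteriorDeriv_apply {g : Finset ι → MvPolynomial ι R}
    (hg : koszulBoundary ι R g = 0) (s : Finset ι) :
    koszulBoundary ι R (exteriorDeriv ι R g) s = ∑ i, X i * pderiv i (g s) + #s • g s := by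
  calc koszulBoundary ι R (exteriorDeriv ι R g) s
      = (koszulBoundary ι R * exteriorDeriv ι R + exteriorDeriv ι R * koszulBoundary ι R) g s := by
        rw [LinearMap.add_apply, Module.End.mul_apply, Module.End.mul_apply, hg, map_zero,
          add_zero]
    _ = _ := by
        rw [koszulBoundary_mul_exteriorDeriv_add_exteriorDeriv_mul_koszulBoundary,
          LinearMap.add_apply, Pi.add_apply, sum_wedge_mul_contract_apply, pointwise_apply,
          LinearMap.sum_apply]
        rfl

lemma exteriorDeriv_apply_mem_pow_idealOfVars {a : ℕ} {g : Finset ι → MvPolynomial ι R}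
    (hg : ∀ s, g s ∈ idealOfVars ι R ^ a) (s : Finset ι) :
    exteriorDeriv ι R g s ∈ idealOfVars ι R ^ (a - 1) := by
  simp only [exteriorDeriv, LinearMap.sum_apply, Finset.sum_apply, Module.End.mul_apply,
    pointwise_apply, wedge_apply]
  refine Submodule.sum_mem _ fun j _ => pderiv_mem_pow_idealOfVars ?_ j
  split_ifs
  · rw [Units.smul_def]; exact Submodule.smul_of_tower_mem _ _ (hg _)
  · exact Submodule.zero_mem _

lemma koszulBoundary_mul_pointwise_eulerInv {K : Type*} [Field K] (c : ℕ) :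
    koszulBoundary ι K * pointwise (eulerInv (c + 1)) =
      pointwise (eulerInv c) * koszulBoundary ι K := by
  have hX : ∀ j : ι, eulerInv c * LinearMap.mulLeft K (X j) =
      LinearMap.mulLeft K (X j) * eulerInv (c + 1) :=
    fun j => LinearMap.ext fun p => eulerInv_X_mul c j p
  simp only [koszulBoundary, sum_mul, mul_sum]
  refine sum_congr rfl fun j _ => ?_
  rw [mul_assoc, contract_mul_pointwise, ← mul_assoc, ← map_mul, ← hX, map_mul, mul_assoc]

end Polynomial

lemma koszulDiff_X_eq_koszulBoundary {R : Type*} [CommRing R] {d k : ℕ}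
    (v : {s : Finset (Fin d) // #s = k + 1} → MvPolynomial (Fin d) R)
    {G : Finset (Fin d) → MvPolynomial (Fin d) R} (hG : ∀ s (h : #s = k + 1), G s = v ⟨s, h⟩)
    (t : {s : Finset (Fin d) // #s = k}) :
    koszulDiff X k v t = koszulBoundary (Fin d) R G t := by
  rw [koszulDiff, koszulBoundary_apply]
  refine sum_congr rfl fun j _ => ?_
  by_cases hj : j ∈ t.val
  · rw [dif_pos hj, if_pos hj]
  · rw [dif_neg hj, if_neg hj, hG, Units.smul_def, zsmul_eq_mul, koszulSign, mul_assoc]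
    push_cast
    rfl

end Koszul

open Koszul

theorem stmt6_general (d m a : ℕ)
    (v : {s : Finset (Fin d) // s.card = m + 1} → MvPolynomial (Fin d) ℂ)
    (hv : ∀ s, v s ∈ (Ideal.span (Set.range (X : Fin d → MvPolynomial (Fin d) ℂ))) ^ a)
    (hcycle : koszulDiff X m v = 0) :
    ∃ w : {s : Finset (Fin d) // s.card = m + 2} → MvPolynomial (Fin d) ℂ,
      (∀ s, w s ∈ (Ideal.span (Set.range (X : Fin d → MvPolynomial (Fin d) ℂ))) ^ (a - 1)) ∧
      koszulDiff X (m + 1) w = v := by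
  let g : Finset (Fin d) → MvPolynomial (Fin d) ℂ :=
    fun s => if h : #s = m + 1 then v ⟨s, h⟩ else 0
  have hg : ∀ s (h : #s = m + 1), g s = v ⟨s, h⟩ := fun s h => dif_pos h
  have hg_zero : ∀ s, #s ≠ m + 1 → g s = 0 := fun s h => dif_neg h
  have hg_mem : ∀ s, g s ∈ idealOfVars (Fin d) ℂ ^ a := fun s => by
    by_cases h : #s = m + 1
    · rw [hg s h]; exact hv _
    · rw [hg_zero s h]; exact Submodule.zero_mem _
  have hg_cycle : koszulBoundary (Fin d) ℂ g = 0 := funext fun t => by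
    by_cases ht : #t = m
    · rw [← koszulDiff_X_eq_koszulBoundary v hg ⟨t, ht⟩, hcycle]; rfl
    · exact koszulBoundary_apply_eq_zero_of_card_ne hg_zero ht
  refine ⟨fun s => eulerInv (m + 2) (exteriorDeriv _ ℂ g s),
    fun s => scaleCoeffs_mem_pow_idealOfVars _ (exteriorDeriv_apply_mem_pow_idealOfVars hg_mem s),
    funext fun t => ?_⟩
  rw [koszulDiff_X_eq_koszulBoundary (G := pointwise (eulerInv (m + 2)) (exteriorDeriv _ ℂ g))
    _ (fun _ _ => rfl), ← Module.End.mul_apply, koszulBoundary_mul_pointwise_eulerInv,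
    Module.End.mul_apply, pointwise_apply, koszulBoundary_exteriorDeriv_apply hg_cycle, t.2,
    eulerInv_sum_X_mul_pderiv_add (Nat.succ_ne_zero m), hg]

/-- In the Koszul complex on the variables of `ℂ[x₁,…,x_d]`, for `a ≥ 1` and `i = m+1 ≥ 1`,
the three-term complex `𝔪^{a-1}·K_{i+1} → 𝔪^a·K_i → 𝔪^{a+1}·K_{i-1}` is exact in the middle:
every Koszul `i`-cycle with coefficients in `𝔪^a` is the boundary of a chain with
coefficients in `𝔪^{a-1}`. -/
theorem stmt6 (d m a : ℕ) (ha : 1 ≤ a)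
    (v : {s : Finset (Fin d) // s.card = m + 1} → MvPolynomial (Fin d) ℂ)
    (hv : ∀ s, v s ∈ (Ideal.span (Set.range (X : Fin d → MvPolynomial (Fin d) ℂ))) ^ a)
    (hcycle : koszulDiff X m v = 0) :
    ∃ w : {s : Finset (Fin d) // s.card = m + 2} → MvPolynomial (Fin d) ℂ,
      (∀ s, w s ∈ (Ideal.span (Set.range (X : Fin d → MvPolynomial (Fin d) ℂ))) ^ (a - 1)) ∧
      koszulDiff X (m + 1) w = v :=
  stmt6_general d m a v hv hcycle
end
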